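/- arXiv:math/9805150 — 3 statements merged into one kernel-verified Lean document; each statement's English description precedes it below -/
import Mathlib

section
/- For all natural numbers i ≥ 1 and n ≥ 16, A_i(n) ≤ f_{i+6}^{(2)}(n), where f_{i+6}^{(2)} denotes the two-fold iterate of f_{i+6}. -/
/-- `f i` for `i ≥ 1`: `f 1 n = n + 1`, `f (i+1) n = (f i)^[⌊√n/2⌋] n`. -/
def f : ℕ → ℕ → ℕ
  | 0, n => n
  | 1, n => n + 1
  | i + 2, n => (f (i + 1))^[Nat.sqrt n / 2] n

/-- Ackermann approximations: `A 1 n = n + 1`, `A (i+1) n = (A i)^[n] n`. -/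
def A : ℕ → ℕ → ℕ
  | 0, n => n
  | 1, n => n + 1
  | i + 2, n => (A (i + 1))^[n] n

/-!
Write `κ n = ⌊√n⌋ / 2`, the number of iterations in the definition of `f`. Unfolding the
definition gives `n + κ(n) ^ j ≤ f_{j+1}(n)`, so `f_5` at least doubles its argument from `36`
on, `f_6(x) ≥ 2 ^ κ(x) · x`, and two applications of `f_6` give `f_7(x) ≥ 16 x²`; hence
`f_j(n) ≥ 16 n²` for `j ≥ 8` and `n ≥ 16`. Then `κ(f_{i+7}(n)) ≥ 2n`, so `f_{i+7}^{(2)}(n)`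
dominates `f_{i+6}^{(2n)}(n)`, which by induction on `i` dominates `A_i^{(n)}(n) = A_{i+1}(n)`.
-/

open Function

section Iterate

theorem iterate_le_iterate_of_le_of_id_le {α : Type*} [Preorder α] {g h : α → α} {a n : α}
    (hg : id ≤ g) (hh : Monotone h) (hgh : ∀ x, a ≤ x → g x ≤ h x) (hn : a ≤ n) (t : ℕ) :
    g^[t] n ≤ h^[t] n := by
  induction t with
  | zero => rfl
  | succ t ih =>
    rw [iterate_succ_apply', iterate_succ_apply']
    exact (hgh _ (hn.trans (id_le_iterate_of_id_le hg t n))).trans (hh ih)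

variable {g : ℕ → ℕ}

theorem add_mul_le_iterate {d : ℕ → ℕ} (hd : Monotone d) (hg : ∀ x, x + d x ≤ g x) (n t : ℕ) :
    n + t * d n ≤ g^[t] n := by
  induction t with
  | zero => simp
  | succ t ih =>
    rw [iterate_succ_apply']
    calc n + (t + 1) * d n = n + t * d n + d n := by ring
      _ ≤ g^[t] n + d (g^[t] n) := add_le_add ih (hd (le_of_add_le_left ih))
      _ ≤ g (g^[t] n) := hg _

theorem pow_mul_le_iterate {a c n : ℕ} (hc : 1 ≤ c) (hg : ∀ x, a ≤ x → c * x ≤ g x)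
    (hn : a ≤ n) (t : ℕ) : c ^ t * n ≤ g^[t] n := by
  induction t with
  | zero => simp
  | succ t ih =>
    rw [iterate_succ_apply', pow_succ', mul_assoc]
    have han : a ≤ c ^ t * n := hn.trans (Nat.le_mul_of_pos_left n (Nat.one_le_pow _ _ hc))
    exact (Nat.mul_le_mul_left c ih).trans (hg _ (han.trans ih))

end Iterate

theorem le_sqrt_div_two {m n : ℕ} (h : 2 * m * (2 * m) ≤ n) : m ≤ Nat.sqrt n / 2 := by
  have := Nat.le_sqrt.2 h
  omega

theorem id_le_f (j : ℕ) : id ≤ f (j + 1) := by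
  induction j with
  | zero => exact fun n => Nat.le_succ n
  | succ j ih => exact fun n => id_le_iterate_of_id_le ih _ n

theorem monotone_f (j : ℕ) : Monotone (f (j + 1)) := by
  induction j with
  | zero => exact fun _ _ h => Nat.succ_le_succ h
  | succ j ih =>
    intro a b hab
    calc f (j + 2) a ≤ (f (j + 1))^[Nat.sqrt a / 2] b := ih.iterate _ hab
      _ ≤ f (j + 2) b :=
        monotone_iterate_of_id_le (id_le_f j) (Nat.div_le_div_right (Nat.sqrt_le_sqrt hab)) b

theorem f_iterate_le_f {j m n : ℕ} (h : 2 * m * (2 * m) ≤ n) :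
    (f (j + 1))^[m] n ≤ f (j + 2) n :=
  monotone_iterate_of_id_le (id_le_f j) (le_sqrt_div_two h) n

theorem f_le_f {j J n : ℕ} (h : j ≤ J) (hn : 4 ≤ n) : f (j + 1) n ≤ f (J + 1) n :=
  monotone_nat_of_le_succ (f := fun k => f (k + 1) n)
    (fun _ => f_iterate_le_f (m := 1) hn) h

theorem add_pow_le_f (j n : ℕ) : n + (Nat.sqrt n / 2) ^ j ≤ f (j + 1) n := by
  induction j generalizing n with
  | zero => exact le_rfl
  | succ j ih =>
    have hd : Monotone fun x => (Nat.sqrt x / 2) ^ j := fun _ _ h =>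
      Nat.pow_le_pow_left (Nat.div_le_div_right (Nat.sqrt_le_sqrt h)) j
    show n + (Nat.sqrt n / 2) ^ (j + 1) ≤ (f (j + 1))^[Nat.sqrt n / 2] n
    simpa only [pow_succ'] using add_mul_le_iterate hd ih n (Nat.sqrt n / 2)

theorem two_mul_le_f_five {x : ℕ} (hx : 36 ≤ x) : 2 * x ≤ f 5 x := by
  have hf : x + (Nat.sqrt x / 2) ^ 4 ≤ f 5 x := add_pow_le_f 4 x
  have hk : 3 ≤ Nat.sqrt x / 2 := le_sqrt_div_two (by omega)
  set k := Nat.sqrt x / 2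
  have hsk : Nat.sqrt x + 1 ≤ 2 * k + 2 := by omega
  have hxk : x ≤ k ^ 4 :=
    calc x ≤ (Nat.sqrt x + 1) * (Nat.sqrt x + 1) := (Nat.lt_succ_sqrt x).le
      _ ≤ (2 * k + 2) * (2 * k + 2) := Nat.mul_le_mul hsk hsk
      _ ≤ k ^ 4 := by nlinarith [Nat.mul_le_mul_left (k * k) (Nat.mul_le_mul hk hk)]
  omega

theorem two_pow_mul_le_f_six {x : ℕ} (hx : 36 ≤ x) : 2 ^ (Nat.sqrt x / 2) * x ≤ f 6 x :=
  pow_mul_le_iterate (c := 2) (g := f 5) one_le_two (fun _ hy => two_mul_le_f_five hy) hx _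

theorem sixteen_mul_sq_le_f_seven {x : ℕ} (hx : 64 ≤ x) : 16 * x ^ 2 ≤ f 7 x := by
  set s := Nat.sqrt x
  have hv : 16 * x ≤ f 6 x :=
    calc 16 * x = 2 ^ 4 * x := rfl
      _ ≤ 2 ^ (s / 2) * x := Nat.mul_le_mul_right x
        (Nat.pow_le_pow_right two_pos (le_sqrt_div_two (by omega)))
      _ ≤ f 6 x := two_pow_mul_le_f_six (by omega)
  set v := f 6 x
  have hkv : 2 * s ≤ Nat.sqrt v / 2 := le_sqrt_div_two (by nlinarith [Nat.sqrt_le x])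
  have hx_lt : x < 2 ^ (2 * s) := by
    have h := Nat.lt_two_pow_self (n := s)
    calc x < (s + 1) * (s + 1) := Nat.lt_succ_sqrt x
      _ ≤ 2 ^ s * 2 ^ s := Nat.mul_le_mul h h
      _ = 2 ^ (2 * s) := by rw [← pow_add, two_mul]
  calc 16 * x ^ 2 = x * (16 * x) := by ring
    _ ≤ 2 ^ (Nat.sqrt v / 2) * v :=
      Nat.mul_le_mul (hx_lt.le.trans (Nat.pow_le_pow_right two_pos hkv)) hv
    _ ≤ f 6 v := two_pow_mul_le_f_six (by omega)
    _ ≤ f 7 x := f_iterate_le_f (j := 5) (m := 2) (by omega)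

theorem sixteen_mul_sq_le_f (j : ℕ) {n : ℕ} (hn : 16 ≤ n) : 16 * n ^ 2 ≤ f (j + 8) n := by
  have hw : 64 ≤ f 7 n := by
    have h : n + (Nat.sqrt n / 2) ^ 6 ≤ f 7 n := add_pow_le_f 6 n
    have hk : 2 ^ 6 ≤ (Nat.sqrt n / 2) ^ 6 :=
      Nat.pow_le_pow_left (le_sqrt_div_two (by omega)) 6
    omega
  calc 16 * n ^ 2 ≤ 16 * f 7 n ^ 2 := Nat.mul_le_mul_left 16 (Nat.pow_le_pow_left (id_le_f 6 n) 2)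
    _ ≤ f 7 (f 7 n) := sixteen_mul_sq_le_f_seven hw
    _ ≤ f 8 n := f_iterate_le_f (j := 6) (m := 2) (by omega)
    _ ≤ f (j + 8) n := f_le_f (by omega) (by omega)

theorem f_iterate_le_f_iterate_two {j n : ℕ} (h : 16 * n ^ 2 ≤ f (j + 2) n) :
    (f (j + 1))^[2 * n] n ≤ (f (j + 2))^[2] n :=
  calc (f (j + 1))^[2 * n] n ≤ (f (j + 1))^[2 * n] (f (j + 2) n) :=
        (monotone_f j).iterate _ (id_le_f (j + 1) n)
    _ ≤ f (j + 2) (f (j + 2) n) := f_iterate_le_f (by nlinarith)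

theorem id_le_A (i : ℕ) : id ≤ A (i + 1) := by
  induction i with
  | zero => exact fun n => Nat.le_succ n
  | succ i ih => exact fun n => id_le_iterate_of_id_le ih n n

theorem A_le_f_iterate (i : ℕ) (hi : 1 ≤ i) (n : ℕ) (hn : 16 ≤ n) :
    A i n ≤ (f (i + 6))^[2] n := by
  obtain ⟨i, rfl⟩ := Nat.exists_eq_add_of_le' hi
  clear hi
  induction i generalizing n with
  | zero =>
    calc A 1 n = f 1 n := rfl
      _ ≤ f 7 n := f_le_f (by omega) (by omega)
      _ ≤ f 7 (f 7 n) := id_le_f 6 _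
  | succ i ih =>
    calc A (i + 2) n = (A (i + 1))^[n] n := rfl
      _ ≤ ((f (i + 7))^[2])^[n] n :=
        iterate_le_iterate_of_le_of_id_le (id_le_A i) ((monotone_f _).iterate 2) ih hn n
      _ = (f (i + 7))^[2 * n] n := by rw [iterate_mul]
      _ ≤ (f (i + 8))^[2] n := f_iterate_le_f_iterate_two (sixteen_mul_sq_le_f i hn)
end

section
/- For all natural numbers i ≥ 7 and n ≥ 16, A_i(n) ≤ f_{i+7}(n). -/
lemma f_succ_succ (k n : ℕ) : f (k + 2) n = (f (k + 1))^[Nat.sqrt n / 2] n := rfl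

lemma A_succ_succ (k n : ℕ) : A (k + 2) n = (A (k + 1))^[n] n := rfl

lemma iter_ge {g : ℕ → ℕ} (hg : ∀ x, x ≤ g x) : ∀ (k) (x), x ≤ g^[k] x := by
  intro k
  induction k with
  | zero => simp
  | succ k ih =>
    intro x
    rw [Function.iterate_succ_apply]
    exact (hg x).trans (ih (g x))

lemma iter_count_mono {g : ℕ → ℕ} (hg : ∀ x, x ≤ g x) {a b : ℕ} (h : a ≤ b) (x : ℕ) :
    g^[a] x ≤ g^[b] x := by
  obtain ⟨c, rfl⟩ := Nat.exists_eq_add_of_le h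
  rw [Nat.add_comm, Function.iterate_add_apply]
  exact iter_ge hg c _

lemma f_ge : ∀ (k n : ℕ), n ≤ f k n := by
  intro k
  induction k with
  | zero => intro n; simp [f]
  | succ k ih =>
    cases k with
    | zero => intro n; simp [f]
    | succ k =>
      intro n
      rw [f_succ_succ]
      exact iter_ge ih _ n

lemma f_mono : ∀ k, Monotone (f k) := by
  intro k
  induction k with
  | zero => intro a b h; simpa [f] using h
  | succ k ih =>
    cases k with
    | zero => intro a b h; simpa [f] using h
    | succ k =>
      intro a b h
      rw [f_succ_succ, f_succ_succ]
      calc (f (k + 1))^[Nat.sqrt a / 2] a ≤ (f (k + 1))^[Nat.sqrt a / 2] b :=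
            (ih.iterate _) h
        _ ≤ (f (k + 1))^[Nat.sqrt b / 2] b :=
            iter_count_mono (f_ge (k + 1)) (Nat.div_le_div_right (Nat.sqrt_le_sqrt h)) b

lemma A_ge : ∀ (i n : ℕ), n ≤ A i n := by
  intro i
  induction i with
  | zero => intro n; simp [A]
  | succ i ih =>
    cases i with
    | zero => intro n; simp [A]
    | succ i =>
      intro n
      rw [A_succ_succ]
      exact iter_ge ih _ n

lemma sqrt_ge_four {x : ℕ} (hx : 16 ≤ x) : 4 ≤ Nat.sqrt x :=
  Nat.le_sqrt.mpr (by omega)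

lemma q_ge_two {x : ℕ} (hx : 16 ≤ x) : 2 ≤ Nat.sqrt x / 2 := by
  have := sqrt_ge_four hx
  omega

lemma f_le_f_succ (k : ℕ) {n : ℕ} (hn : 4 ≤ n) : f k n ≤ f (k + 1) n := by
  cases k with
  | zero => simp [f]
  | succ k =>
    rw [f_succ_succ]
    have hs : 1 ≤ Nat.sqrt n / 2 := by
      have : 2 ≤ Nat.sqrt n := Nat.le_sqrt.mpr (by omega)
      omega
    calc f (k + 1) n = (f (k + 1))^[1] n := by simp
      _ ≤ _ := iter_count_mono (f_ge (k + 1)) hs n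

lemma f_level_mono {k k' : ℕ} (h : k ≤ k') {n : ℕ} (hn : 4 ≤ n) : f k n ≤ f k' n := by
  induction h with
  | refl => exact le_rfl
  | step h ih => exact le_trans ih (f_le_f_succ _ hn)

/-- Lower bound `f (j+1) x ≥ x + (√x/2)^j` for `x ≥ 16`. -/
lemma f_lower : ∀ (j) (x), 16 ≤ x → x + (Nat.sqrt x / 2) ^ j ≤ f (j + 1) x := by
  intro j
  induction j with
  | zero => intro x hx; simp [f]
  | succ j ih =>
    intro x hx
    rw [f_succ_succ]
    set s := Nat.sqrt x / 2 with hs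
    have key : ∀ k, x + k * s ^ j ≤ (f (j + 1))^[k] x := by
      intro k
      induction k with
      | zero => simp
      | succ k ihk =>
        rw [Function.iterate_succ_apply']
        set z := (f (j + 1))^[k] x with hz
        have hzx : x ≤ z := iter_ge (f_ge (j + 1)) k x
        have hz16 : 16 ≤ z := le_trans hx hzx
        have h1 : z + (Nat.sqrt z / 2) ^ j ≤ f (j + 1) z := ih z hz16
        have h2 : s ≤ Nat.sqrt z / 2 := Nat.div_le_div_right (Nat.sqrt_le_sqrt hzx)
        have h3 : s ^ j ≤ (Nat.sqrt z / 2) ^ j := Nat.pow_le_pow_left h2 j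
        calc x + (k + 1) * s ^ j = (x + k * s ^ j) + s ^ j := by ring
          _ ≤ z + s ^ j := Nat.add_le_add_right ihk _
          _ ≤ z + (Nat.sqrt z / 2) ^ j := Nat.add_le_add_left h3 _
          _ ≤ f (j + 1) z := h1
    calc x + s ^ (j + 1) = x + s * s ^ j := by ring
      _ ≤ (f (j + 1))^[s] x := key s

/-- For `x ≥ 16`, `x ≤ 4q² + 8q + 3` where `q = √x/2`. -/
lemma x_le_q {x : ℕ} (hx : 16 ≤ x) :
    x ≤ 4 * (Nat.sqrt x / 2) ^ 2 + 8 * (Nat.sqrt x / 2) + 3 := by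
  set t := Nat.sqrt x with ht
  set q := t / 2 with hq
  have h1 : x < (t + 1) * (t + 1) := Nat.lt_succ_sqrt x
  have h2 : t ≤ 2 * q + 1 := by omega
  nlinarith

lemma q_pow6_ge {x : ℕ} (hx : 16 ≤ x) : x ≤ (Nat.sqrt x / 2) ^ 6 := by
  have h1 := x_le_q hx
  have h2 := q_ge_two hx
  set q := Nat.sqrt x / 2
  have e1 : 16 ≤ q ^ 4 := by
    calc (16:ℕ) = 2 ^ 4 := by norm_num
      _ ≤ q ^ 4 := Nat.pow_le_pow_left h2 4
  have e2 : q ^ 6 = q ^ 4 * q ^ 2 := by ring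
  nlinarith

/-- `f 6 z ≥ 2z` for `z ≥ 36`. -/
lemma f6_double {z : ℕ} (hz : 36 ≤ z) : 2 * z ≤ f 6 z := by
  have h1 : z + (Nat.sqrt z / 2) ^ 5 ≤ f 6 z := f_lower 5 z (by omega)
  have h2 : 6 ≤ Nat.sqrt z := Nat.le_sqrt.mpr (by omega)
  have h3 : 3 ≤ Nat.sqrt z / 2 := by omega
  have h4 := x_le_q (show 16 ≤ z by omega)
  set q := Nat.sqrt z / 2
  have e1 : 27 ≤ q ^ 3 := by
    calc (27:ℕ) = 3 ^ 3 := by norm_num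
      _ ≤ q ^ 3 := Nat.pow_le_pow_left h3 3
  have e2 : q ^ 5 = q ^ 3 * q ^ 2 := by ring
  nlinarith

/-- `f 7 x ≥ 2x` for `x ≥ 16`. -/
lemma f7_double {x : ℕ} (hx : 16 ≤ x) : 2 * x ≤ f 7 x := by
  have h1 : x + (Nat.sqrt x / 2) ^ 6 ≤ f 7 x := f_lower 6 x hx
  have h2 := q_pow6_ge hx
  omega

lemma f7_ge_two_iter_f6 {x : ℕ} (hx : 16 ≤ x) : f 6 (f 6 x) ≤ f 7 x := by
  rw [show (7 : ℕ) = 5 + 2 from rfl, f_succ_succ]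
  have h2 := q_ge_two hx
  calc f 6 (f 6 x) = (f 6)^[2] x := by
        rw [show (2:ℕ) = 1 + 1 from rfl, Function.iterate_add_apply]; simp
    _ ≤ (f 6)^[Nat.sqrt x / 2] x := iter_count_mono (f_ge 6) h2 x
    _ = (f (5 + 1))^[Nat.sqrt x / 2] x := rfl

lemma f7_add {x : ℕ} (hx : 16 ≤ x) : x + 275 ≤ f 7 x := by
  have h1 : x + 32 ≤ f 6 x := by
    have hl : x + (Nat.sqrt x / 2) ^ 5 ≤ f 6 x := f_lower 5 x hx
    have h2 := q_ge_two hx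
    have : 32 ≤ (Nat.sqrt x / 2) ^ 5 := by
      calc (32 : ℕ) = 2 ^ 5 := by norm_num
        _ ≤ (Nat.sqrt x / 2) ^ 5 := Nat.pow_le_pow_left h2 5
    omega
  set z := f 6 x with hzdef
  have hz : 48 ≤ z := by omega
  have h3 : z + 243 ≤ f 6 z := by
    have hl : z + (Nat.sqrt z / 2) ^ 5 ≤ f 6 z := f_lower 5 z (by omega)
    have h4 : 6 ≤ Nat.sqrt z := Nat.le_sqrt.mpr (by omega)
    have h5 : 3 ≤ Nat.sqrt z / 2 := by omega
    have : 243 ≤ (Nat.sqrt z / 2) ^ 5 := by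
      calc (243 : ℕ) = 3 ^ 5 := by norm_num
        _ ≤ (Nat.sqrt z / 2) ^ 5 := Nat.pow_le_pow_left h5 5
    omega
  have h6 : f 6 (f 6 x) ≤ f 7 x := f7_ge_two_iter_f6 hx
  rw [← hzdef] at h6
  omega

lemma f7_quad {x : ℕ} (hx : 16 ≤ x) : 4 * x ≤ f 7 x := by
  rcases le_or_gt x 91 with h | h
  · have := f7_add hx
    omega
  · have h36 : 36 ≤ x := by omega
    have h1 : 2 * x ≤ f 6 x := f6_double h36
    have h2 : 2 * f 6 x ≤ f 6 (f 6 x) := f6_double (by omega)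
    have h3 := f7_ge_two_iter_f6 hx
    omega

/-- `f 7 y ≥ y²` for `y ≥ 291`. -/
lemma f7_sq {y : ℕ} (hy : 291 ≤ y) : y * y ≤ f 7 y := by
  have h1 : y + (Nat.sqrt y / 2) ^ 6 ≤ f 7 y := f_lower 6 y (by omega)
  have h2 : 17 ≤ Nat.sqrt y := Nat.le_sqrt.mpr (by omega)
  have h3 : 8 ≤ Nat.sqrt y / 2 := by omega
  have h4 := x_le_q (show 16 ≤ y by omega)
  set q := Nat.sqrt y / 2
  have h5 : 4 * q ^ 2 + 8 * q + 3 ≤ q ^ 3 := by nlinarith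
  have h6 : y * y ≤ q ^ 3 * q ^ 3 := Nat.mul_le_mul (h4.trans h5) (h4.trans h5)
  have h7 : q ^ 3 * q ^ 3 = q ^ 6 := by ring
  omega

/-- Key growth bound: `f 8 x ≥ 16x²` for `x ≥ 16`. -/
lemma f8_sq {x : ℕ} (hx : 16 ≤ x) : 16 * (x * x) ≤ f 8 x := by
  set y := f 7 x with hy
  have hy1 : x + 275 ≤ y := f7_add hx
  have hy2 : 4 * x ≤ y := f7_quad hx
  have h8 : f 7 y ≤ f 8 x := by
    rw [show (8 : ℕ) = 6 + 2 from rfl, f_succ_succ]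
    have h2 := q_ge_two hx
    calc f 7 y = (f 7)^[2] x := by
          rw [show (2:ℕ) = 1 + 1 from rfl, Function.iterate_add_apply]; simp [hy]
      _ ≤ (f 7)^[Nat.sqrt x / 2] x := iter_count_mono (f_ge 7) h2 x
      _ = (f (6 + 1))^[Nat.sqrt x / 2] x := rfl
  have hsq : y * y ≤ f 7 y := f7_sq (by omega)
  nlinarith

lemma iter_le_of_le {h G : ℕ → ℕ} (hh : ∀ x, x ≤ h x) (hG : Monotone G)
    (hle : ∀ x, 16 ≤ x → h x ≤ G x) {x : ℕ} (hx : 16 ≤ x) (m : ℕ) :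
    h^[m] x ≤ G^[m] x := by
  induction m with
  | zero => exact le_rfl
  | succ m ih =>
    rw [Function.iterate_succ_apply', Function.iterate_succ_apply']
    have h16 : 16 ≤ h^[m] x := le_trans hx (iter_ge hh m x)
    calc h (h^[m] x) ≤ G (h^[m] x) := hle _ h16
      _ ≤ G (G^[m] x) := hG ih

/-- Main invariant: `(A i)^[m] m ≤ f (i+6) (f (i+6) m)` for `i ≥ 1`, `m ≥ 16`. -/
lemma main_inv : ∀ i, 1 ≤ i → ∀ m, 16 ≤ m → (A i)^[m] m ≤ f (i + 6) (f (i + 6) m) := by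
  intro i hi
  induction i, hi using Nat.le_induction with
  | base =>
    intro m hm
    have h1 : ∀ (k x : ℕ), (A 1)^[k] x = x + k := by
      intro k
      induction k with
      | zero => simp
      | succ k ihk =>
        intro x
        rw [Function.iterate_succ_apply]
        have : A 1 x = x + 1 := rfl
        rw [this, ihk]
        omega
    rw [h1]
    show m + m ≤ f 7 (f 7 m)
    have h2 := f7_double hm
    have h3 : f 7 m ≤ f 7 (f 7 m) := f_ge 7 (f 7 m)
    omega
  | succ i hi ih =>
    intro m hm
    obtain ⟨j, rfl⟩ : ∃ j, i = j + 1 := ⟨i - 1, by omega⟩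
    set g := f (j + 7) with hg
    have hA1 : ∀ x, 16 ≤ x → A (j + 2) x ≤ g^[2] x := by
      intro x hx
      rw [A_succ_succ]
      have := ih x hx
      calc (A (j + 1))^[x] x ≤ f (j + 1 + 6) (f (j + 1 + 6) x) := this
        _ = g^[2] x := by
            rw [show (2:ℕ) = 1 + 1 from rfl, Function.iterate_add_apply]
            simp only [Function.iterate_one, hg]
    have step1 : (A (j + 2))^[m] m ≤ (g^[2])^[m] m :=
      iter_le_of_le (A_ge (j + 2)) ((f_mono (j + 7)).iterate 2) hA1 hm m
    have step2 : (g^[2])^[m] m = g^[2 * m] m := by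
      rw [Function.iterate_mul]
    set M := f (j + 8) m with hM
    have hMbig : 16 * (m * m) ≤ M := by
      calc 16 * (m * m) ≤ f 8 m := f8_sq hm
        _ ≤ f (j + 8) m := f_level_mono (by omega) (by omega)
    have hMm : m ≤ M := f_ge _ m
    have hsM : 2 * m ≤ Nat.sqrt M / 2 := by
      have h4 : 4 * m ≤ Nat.sqrt M := Nat.le_sqrt.mpr (by nlinarith)
      omega
    have hfin : g^[2 * m] m ≤ f (j + 8) M := by
      rw [show j + 8 = (j + 6) + 2 from rfl, f_succ_succ]
      calc g^[2 * m] m ≤ g^[2 * m] M := ((f_mono (j + 7)).iterate _) hMm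
        _ ≤ g^[Nat.sqrt M / 2] M := iter_count_mono (f_ge (j + 7)) hsM M
        _ = (f (j + 6 + 1))^[Nat.sqrt M / 2] M := rfl
    have : j + 1 + 1 + 6 = j + 8 := by omega
    rw [this]
    calc (A (j + 2))^[m] m ≤ (g^[2])^[m] m := step1
      _ = g^[2 * m] m := step2
      _ ≤ f (j + 8) M := hfin

theorem A_le_f (i : ℕ) (hi : 7 ≤ i) (n : ℕ) (hn : 16 ≤ n) :
    A i n ≤ f (i + 7) n := by
  obtain ⟨k, rfl⟩ : ∃ k, i = k + 2 := ⟨i - 2, by omega⟩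
  rw [A_succ_succ]
  have h2 := main_inv (k + 1) (by omega) n hn
  have h3 : f (k + 1 + 6) (f (k + 1 + 6) n) ≤ f (k + 8) n := by
    have : k + 1 + 6 = k + 7 := by omega
    rw [this, show k + 8 = (k + 6) + 2 from rfl, f_succ_succ]
    have hq := q_ge_two hn
    calc f (k + 7) (f (k + 7) n) = (f (k + 7))^[2] n := by
          rw [show (2:ℕ) = 1 + 1 from rfl, Function.iterate_add_apply]; simp
      _ ≤ (f (k + 7))^[Nat.sqrt n / 2] n := iter_count_mono (f_ge (k + 7)) hq n
      _ = (f (k + 6 + 1))^[Nat.sqrt n / 2] n := rfl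
  have h4 : f (k + 8) n ≤ f (k + 9) n := f_le_f_succ _ (by omega)
  have : k + 2 + 7 = k + 9 := by omega
  rw [this]
  omega
end

section
/- Fix an integer k > 2 and define the pair coloring c({m,n}) = Pr(I(m,n), d(m,n)). Then no subset of the interval [4k², f_k(4k²)) of size k+1 is min-homogeneous for c: for every x_0 < x_1 < ... < x_k with 4k² ≤ x_0 and x_k < f_k(4k²), the set {x_0,...,x_k} is not min-homogeneous for c. -/
/-- `d k i m n = |{l : m < f_i^(l)(4k²) ≤ n}|`. -/
noncomputable def d (k i m n : ℕ) : ℕ :=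
  {l : ℕ | m < (f i)^[l] (4 * k ^ 2) ∧ (f i)^[l] (4 * k ^ 2) ≤ n}.ncard

/-- `I k m n` is the greatest `i ≥ 1` with `d k i m n > 0`. -/
noncomputable def I (k m n : ℕ) : ℕ := sSup {i : ℕ | 1 ≤ i ∧ 0 < d k i m n}

/-- `D k m n = d_{I(m,n)}(m,n)`. -/
noncomputable def D (k m n : ℕ) : ℕ := d k (I k m n) m n

/-- The standard pairing function `Pr(m,n) = C(m+n+1,2) + n`. -/
def Pr (m n : ℕ) : ℕ := (m + n + 1).choose 2 + n

/-- The coloring `c({m,n}) = Pr(I(m,n), d(m,n))` (on pairs `m < n`). -/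
noncomputable def c (k m n : ℕ) : ℕ := Pr (I k m n) (D k m n)

lemma iter_ge_s9 {g : ℕ → ℕ} (hg : ∀ m, 4 ≤ m → m + 1 ≤ g m) :
    ∀ l n, 4 ≤ n → n + l ≤ g^[l] n := by
  intro l
  induction l with
  | zero => simp
  | succ l ih =>
    intro n hn
    rw [Function.iterate_succ_apply]
    have h1 := hg n hn
    have h2 := ih (g n) (by omega)
    omega

lemma f_succ_ge : ∀ i n, 4 ≤ n → n + 1 ≤ f (i + 1) n := by
  intro i
  induction i with
  | zero => intro n hn; simp [f]
  | succ i ih =>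
    intro n hn
    have hs : 2 ≤ Nat.sqrt n := Nat.le_sqrt.2 (by omega)
    have ht : 1 ≤ Nat.sqrt n / 2 := by omega
    have h := iter_ge_s9 ih (Nat.sqrt n / 2) n hn
    show n + 1 ≤ (f (i + 1))^[Nat.sqrt n / 2] n
    omega

lemma f_iter_ge (i l n : ℕ) (hn : 4 ≤ n) : n + l ≤ (f (i + 1))^[l] n :=
  iter_ge_s9 (f_succ_ge i) l n hn

lemma f_mono_succ (i n : ℕ) (hn : 4 ≤ n) : f (i + 1) n ≤ f (i + 2) n := by
  have hs : 2 ≤ Nat.sqrt n := Nat.le_sqrt.2 (by omega)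
  obtain ⟨t, ht⟩ : ∃ t, Nat.sqrt n / 2 = t + 1 := ⟨Nat.sqrt n / 2 - 1, by omega⟩
  show f (i + 1) n ≤ (f (i + 1))^[Nat.sqrt n / 2] n
  rw [ht, Function.iterate_succ_apply]
  have h4 : 4 ≤ f (i + 1) n := by have := f_succ_ge i n hn; omega
  have := f_iter_ge i t (f (i + 1) n) h4
  omega

lemma f_mono_s9 {i j : ℕ} (hij : i ≤ j) (n : ℕ) (hn : 4 ≤ n) :
    f (i + 1) n ≤ f (j + 1) n := by
  induction j with
  | zero =>
    have : i = 0 := Nat.le_zero.mp hij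
    subst this; rfl
  | succ j ih =>
    rcases Nat.lt_or_ge i (j + 1) with h | h
    · exact le_trans (ih (by omega)) (f_mono_succ j n hn)
    · have : i = j + 1 := by omega
      subst this; rfl

lemma sqrt_a0 (k : ℕ) : Nat.sqrt (4 * k ^ 2) = 2 * k := by
  rw [show 4 * k ^ 2 = (2 * k) ^ 2 by ring, Nat.sqrt_eq']

lemma f_base (k : ℕ) (hk : 3 ≤ k) : ∀ j, 4 * k ^ 2 + (j + 1) ≤ f (j + 1) (4 * k ^ 2) := by
  have h4 : 4 ≤ 4 * k ^ 2 := by nlinarith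
  intro j
  induction j with
  | zero => simp [f]
  | succ j ih =>
    set A := 4 * k ^ 2 with hA
    show A + (j + 2) ≤ (f (j + 1))^[Nat.sqrt A / 2] A
    have hsq : Nat.sqrt A / 2 = k := by rw [hA, sqrt_a0]; omega
    rw [hsq]
    obtain ⟨t, ht⟩ : ∃ t, k = t + 1 := ⟨k - 1, by omega⟩
    rw [ht, Function.iterate_succ_apply]
    have h4' : 4 ≤ f (j + 1) A := by omega
    have := f_iter_ge j t (f (j + 1) A) h4'
    omega

lemma dset_finite (k m n i : ℕ) (hk : 1 ≤ k) (hi : 1 ≤ i) :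
    {l : ℕ | m < (f i)^[l] (4 * k ^ 2) ∧ (f i)^[l] (4 * k ^ 2) ≤ n}.Finite := by
  obtain ⟨i', rfl⟩ : ∃ i', i = i' + 1 := ⟨i - 1, by omega⟩
  apply Set.Finite.subset (Set.finite_Iic n)
  intro l hl
  obtain ⟨_, hl2⟩ := hl
  have h4 : 4 ≤ 4 * k ^ 2 := by nlinarith
  have := f_iter_ge i' l (4 * k ^ 2) h4
  simp only [Set.mem_Iic]
  omega

lemma f1_iter : ∀ l x : ℕ, (f 1)^[l] x = x + l := by
  intro l
  induction l with
  | zero => simp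
  | succ l ih => intro x; rw [Function.iterate_succ_apply, show f 1 x = x + 1 from rfl, ih]; omega

lemma d1_pos (k m n : ℕ) (hk : 1 ≤ k) (hm : 4 * k ^ 2 ≤ m) (hmn : m < n) :
    0 < d k 1 m n := by
  rw [d, Set.ncard_pos (dset_finite k m n 1 hk le_rfl)]
  exact ⟨m + 1 - 4 * k ^ 2, by rw [f1_iter]; omega, by rw [f1_iter]; omega⟩

lemma d_pos_bound (k i m n : ℕ) (hk : 3 ≤ k) (hm : 4 * k ^ 2 ≤ m) (hi : 1 ≤ i)
    (hd : 0 < d k i m n) : f i (4 * k ^ 2) ≤ n := by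
  obtain ⟨i', rfl⟩ : ∃ i', i = i' + 1 := ⟨i - 1, by omega⟩
  obtain ⟨l, hl1, hl2⟩ := Set.nonempty_of_ncard_ne_zero hd.ne'
  have h4 : 4 ≤ 4 * k ^ 2 := by nlinarith
  obtain ⟨l', rfl⟩ : ∃ l', l = l' + 1 := by
    refine ⟨l - 1, ?_⟩
    rcases Nat.eq_zero_or_pos l with h | h
    · subst h; simp at hl1; omega
    · omega
  rw [Function.iterate_succ_apply] at hl2
  have h4' : 4 ≤ f (i' + 1) (4 * k ^ 2) := by have := f_succ_ge i' _ h4; omega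
  have := f_iter_ge i' l' (f (i' + 1) (4 * k ^ 2)) h4'
  omega

lemma I_bdd (k m n : ℕ) (hk : 3 ≤ k) (hm : 4 * k ^ 2 ≤ m) :
    BddAbove {i : ℕ | 1 ≤ i ∧ 0 < d k i m n} := by
  refine ⟨n, fun i hi => ?_⟩
  obtain ⟨hi1, hd⟩ := hi
  have hb := d_pos_bound k i m n hk hm hi1 hd
  obtain ⟨i', rfl⟩ : ∃ i', i = i' + 1 := ⟨i - 1, by omega⟩
  have := f_base k hk i'
  omega

lemma I_mem (k m n : ℕ) (hk : 3 ≤ k) (hm : 4 * k ^ 2 ≤ m) (hmn : m < n) :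
    1 ≤ I k m n ∧ 0 < d k (I k m n) m n := by
  have h1 : (1 : ℕ) ∈ {i : ℕ | 1 ≤ i ∧ 0 < d k i m n} :=
    ⟨le_rfl, d1_pos k m n (by omega) hm hmn⟩
  exact Nat.sSup_mem ⟨1, h1⟩ (I_bdd k m n hk hm)

lemma le_I (k m n i : ℕ) (hk : 3 ≤ k) (hm : 4 * k ^ 2 ≤ m) (hi : 1 ≤ i)
    (hd : 0 < d k i m n) : i ≤ I k m n :=
  le_csSup (I_bdd k m n hk hm) ⟨hi, hd⟩

lemma I_lt (k m n j : ℕ) (hk : 3 ≤ k) (hm : 4 * k ^ 2 ≤ m) (hmn : m < n)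
    (hj : 1 ≤ j) (hfj : n < f j (4 * k ^ 2)) : I k m n < j := by
  by_contra h
  push_neg at h
  obtain ⟨hI1, hId⟩ := I_mem k m n hk hm hmn
  have hb := d_pos_bound k (I k m n) m n hk hm hI1 hId
  obtain ⟨j', rfl⟩ : ∃ j', j = j' + 1 := ⟨j - 1, by omega⟩
  obtain ⟨i', hi'⟩ : ∃ i', I k m n = i' + 1 := ⟨I k m n - 1, by omega⟩
  have h4 : 4 ≤ 4 * k ^ 2 := by nlinarith
  have := f_mono_s9 (show j' ≤ i' by omega) (4 * k ^ 2) h4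
  rw [← hi'] at this
  omega

lemma Pr_inj {m n m' n' : ℕ} (h : Pr m n = Pr m' n') : m = m' ∧ n = n' := by
  have key : ∀ a b : ℕ, (a + b + 1).choose 2 ≤ Pr a b ∧ Pr a b < (a + b + 2).choose 2 := by
    intro a b
    constructor
    · exact Nat.le_add_right _ _
    · have : (a + b + 2).choose 2 = (a + b + 1).choose 1 + (a + b + 1).choose 2 :=
        Nat.choose_succ_succ _ _
      rw [this, Nat.choose_one_right]
      unfold Pr
      omega
  have hs : m + n = m' + n' := by
    rcases lt_trichotomy (m + n) (m' + n') with hlt | heq | hgt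
    · exfalso
      have h1 := (key m n).2
      have h2 := (key m' n').1
      have h3 : (m + n + 2).choose 2 ≤ (m' + n' + 1).choose 2 :=
        Nat.choose_le_choose 2 (by omega)
      omega
    · exact heq
    · exfalso
      have h1 := (key m' n').2
      have h2 := (key m n).1
      have h3 : (m' + n' + 2).choose 2 ≤ (m + n + 1).choose 2 :=
        Nat.choose_le_choose 2 (by omega)
      omega
  unfold Pr at h
  rw [hs] at h
  omega

lemma d_pos_iff (k i m n : ℕ) (hk : 1 ≤ k) (hi : 1 ≤ i) :
    0 < d k i m n ↔ ∃ l, m < (f i)^[l] (4 * k ^ 2) ∧ (f i)^[l] (4 * k ^ 2) ≤ n := by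
  rw [d, Set.ncard_pos (dset_finite k m n i hk hi)]
  exact Iff.rfl

theorem no_min_homogeneous_size_succ (k : ℕ) (hk : 2 < k) (x : ℕ → ℕ)
    (hmono : ∀ a b, a < b → b ≤ k → x a < x b)
    (hx0 : 4 * k ^ 2 ≤ x 0) (hxk : x k < f k (4 * k ^ 2)) :
    ∃ a b b', a < b ∧ b ≤ k ∧ a < b' ∧ b' ≤ k ∧
      c k (x a) (x b) ≠ c k (x a) (x b') := by
  by_contra hcon
  push_neg at hcon
  have hk3 : 3 ≤ k := hk
  have hxle : ∀ a b, a ≤ b → b ≤ k → x a ≤ x b := by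
    intro a b hab hbk
    rcases Nat.lt_or_ge a b with h | h
    · exact (hmono a b h hbk).le
    · have : a = b := by omega
      subst this; rfl
  have hxge : ∀ a, a ≤ k → 4 * k ^ 2 ≤ x a := fun a ha =>
    le_trans hx0 (hxle 0 a (Nat.zero_le _) ha)
  have key : ∀ a, a + 2 ≤ k → I k (x (a+1)) (x (a+2)) < I k (x a) (x (a+1)) := by
    intro a ha
    have hma : 4 * k ^ 2 ≤ x a := hxge a (by omega)
    have h01 : x a < x (a+1) := hmono a (a+1) (by omega) (by omega)
    have h12 : x (a+1) < x (a+2) := hmono (a+1) (a+2) (by omega) (by omega)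
    have h2k : x (a+2) ≤ x k := hxle (a+2) k ha le_rfl
    have h1k : x (a+1) ≤ x k := by omega
    have hc := hcon a (a+1) k (by omega) (by omega) (by omega) le_rfl
    unfold c at hc
    have hPr := Pr_inj hc
    obtain ⟨hi1, hdi⟩ := I_mem k (x a) (x (a+1)) hk3 hma h01
    set i := I k (x a) (x (a+1)) with hidef
    have hIeq : i = I k (x a) (x k) := hPr.1
    have hDeq := hPr.2
    unfold D at hDeq
    rw [← hIeq, ← hidef] at hDeq
    -- hDeq : d k i (x a) (x (a+1)) = d k i (x a) (x k)
    have claim1 : ∀ l, ¬ (x (a+1) < (f i)^[l] (4 * k ^ 2) ∧ (f i)^[l] (4 * k ^ 2) ≤ x k) := by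
      intro l hl
      have hss : {l : ℕ | x a < (f i)^[l] (4 * k ^ 2) ∧ (f i)^[l] (4 * k ^ 2) ≤ x (a+1)} ⊂
          {l : ℕ | x a < (f i)^[l] (4 * k ^ 2) ∧ (f i)^[l] (4 * k ^ 2) ≤ x k} := by
        constructor
        · intro l' hl'
          exact ⟨hl'.1, le_trans hl'.2 h1k⟩
        · intro hsub
          have hbig : l ∈ {l : ℕ | x a < (f i)^[l] (4 * k ^ 2) ∧ (f i)^[l] (4 * k ^ 2) ≤ x k} :=
            ⟨lt_trans h01 hl.1, hl.2⟩
          have := (hsub hbig).2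
          omega
      have hlt : d k i (x a) (x (a+1)) < d k i (x a) (x k) :=
        Set.ncard_lt_ncard hss (dset_finite k (x a) (x k) i (by omega) hi1)
      omega
    obtain ⟨hI1', hdI'⟩ := I_mem k (x (a+1)) (x (a+2)) hk3 (hxge (a+1) (by omega)) h12
    set i' := I k (x (a+1)) (x (a+2)) with hi'def
    by_contra hge
    push_neg at hge
    -- hge : i ≤ i'
    have hsub : {l : ℕ | x (a+1) < (f i')^[l] (4 * k ^ 2) ∧ (f i')^[l] (4 * k ^ 2) ≤ x (a+2)} ⊆
        {l : ℕ | x a < (f i')^[l] (4 * k ^ 2) ∧ (f i')^[l] (4 * k ^ 2) ≤ x k} := by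
      intro l hl
      exact ⟨lt_trans h01 hl.1, le_trans hl.2 h2k⟩
    have hposbig : 0 < d k i' (x a) (x k) := by
      have hle : d k i' (x (a+1)) (x (a+2)) ≤ d k i' (x a) (x k) :=
        Set.ncard_le_ncard hsub (dset_finite k (x a) (x k) i' (by omega) hI1')
      omega
    have hle' : i' ≤ i := by
      rw [hIeq]
      exact le_I k (x a) (x k) i' hk3 hma hI1' hposbig
    have hii : i' = i := le_antisymm hle' hge
    rw [hii] at hdI'
    obtain ⟨l, hl1, hl2⟩ := (d_pos_iff k i (x (a+1)) (x (a+2)) (by omega) hi1).1 hdI'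
    exact claim1 l ⟨hl1, le_trans hl2 h2k⟩
  have chain : ∀ a, a + 1 ≤ k → I k (x a) (x (a+1)) + a ≤ I k (x 0) (x 1) := by
    intro a
    induction a with
    | zero =>
      intro _
      show I k (x 0) (x (0+1)) + 0 ≤ I k (x 0) (x (0+1))
      omega
    | succ a ih =>
      intro ha
      have h1 := key a (by omega)
      have h2 := ih (by omega)
      show I k (x (a+1)) (x (a+2)) + (a+1) ≤ I k (x 0) (x 1)
      omega
  have hlt : I k (x 0) (x 1) < k := by
    apply I_lt k (x 0) (x 1) k hk3 (hxge 0 (by omega)) (hmono 0 1 (by omega) (by omega)) (by omega)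
    calc x 1 ≤ x k := hxle 1 k (by omega) le_rfl
    _ < f k (4 * k ^ 2) := hxk
  have hlast : 1 ≤ I k (x (k-1)) (x (k-1+1)) :=
    (I_mem k _ _ hk3 (hxge (k-1) (by omega)) (hmono (k-1) (k-1+1) (by omega) (by omega))).1
  have := chain (k-1) (by omega)
  omega
end
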